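/- arXiv:1106.5042 — 3 statements merged into one kernel-verified Lean document; each statement's English description precedes it below -/
import Mathlib

section
/- The absolute value process |S^{(α)}| of an α-skew random walk has the same distribution as the absolute value |S| of a simple symmetric random walk on ℤ, i.e., |S^{(α)}| is a simple symmetric random walk on ℤ₊ reflected at 0. -/
open MeasureTheory

/-- One-step transition probability of the α-skew random walk. -/
noncomputable def stepP (α : ℝ) (m m' : ℤ) : ℝ :=
  if m' = m + 1 then (if m = 0 then α else 1/2)
  else if m' = m - 1 then (if m = 0 then 1 - α else 1/2)
  else 0

/-- `S` is an α-skew random walk started at `0` under the probability measure `P`: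
its finite-dimensional distributions are given by the product of the one-step
transition probabilities, with initial state `0`. -/
def IsSkewRW (α : ℝ) {Ω : Type*} [MeasurableSpace Ω] (P : Measure Ω)
    (S : ℕ → Ω → ℤ) : Prop :=
  IsProbabilityMeasure P ∧ (∀ k, Measurable (S k)) ∧
  ∀ (n : ℕ) (path : ℕ → ℤ),
    P {ω | ∀ k ≤ n, S k ω = path k} =
      ENNReal.ofReal ((if path 0 = 0 then 1 else 0) *
        ∏ k ∈ Finset.range n, stepP α (path k) (path (k + 1)))

/-- Return probabilities of the simple symmetric random walk. -/
noncomputable def gfun (k : ℕ) : ℝ :=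
  if Even k then (Nat.choose k (k / 2) : ℝ) / 2 ^ k else 0

/-! Summing the path probabilities of the α-skew walk over all sign choices along a nonnegative
path `a` gives, by induction on its length, `𝟙[a 0 = 0] * ∏ q (a k) (a (k + 1))`, where
`q m c = absStepP α m c` is the probability of stepping from `m` to `±c`. Since `q m c` only
depends on `|m|`, and from `0` the one-sided probabilities `α` and `1 - α` add up to `1`, `q` does
not depend on `α`. Hence `|S^{(α)}|` and `|S|` have the same finite-dimensional distributions,
and these determine the law of a process. -/

open Finset

lemma stepP_nonneg {α : ℝ} (hα : α ∈ Set.Icc 0 1) (m c : ℤ) : 0 ≤ stepP α m c := by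
  unfold stepP
  split_ifs <;> linarith [hα.1, hα.2]

lemma stepP_neg_left {m : ℤ} (hm : m ≠ 0) (α : ℝ) (c : ℤ) :
    stepP α (-m) c = stepP α m (-c) := by
  unfold stepP
  simp only [hm, neg_eq_zero, if_false]
  split_ifs <;> first | rfl | omega

noncomputable def absStepP (α : ℝ) (m c : ℤ) : ℝ :=
  ∑ s ∈ ({c, -c} : Finset ℤ), stepP α m s

lemma absStepP_eq_half (α : ℝ) (m c : ℤ) : absStepP α m c = absStepP (1/2) m c := by
  rcases eq_or_ne m 0 with rfl | hm
  · rcases eq_or_ne c 0 with rfl | hc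
    · simp [absStepP, stepP]
    · simp only [absStepP, sum_pair (show c ≠ -c by omega), stepP]
      split_ifs <;> first | omega | ring
  · simp [absStepP, stepP, hm]

lemma absStepP_neg_left (α : ℝ) (m c : ℤ) : absStepP α (-m) c = absStepP α m c := by
  rcases eq_or_ne m 0 with rfl | hm
  · rw [neg_zero]
  rcases eq_or_ne c 0 with rfl | hc
  · simp [absStepP, stepP_neg_left hm]
  · simp only [absStepP, stepP_neg_left hm, sum_pair (show c ≠ -c by omega), neg_neg, add_comm]

lemma absStepP_congr_abs {m m' : ℤ} (h : |m| = |m'|) (α : ℝ) (c : ℤ) :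
    absStepP α m c = absStepP α m' c := by
  rcases abs_eq_abs.mp h with rfl | rfl
  · rfl
  · exact absStepP_neg_left α m' c

open Classical in
noncomputable def signedPaths (a : ℕ → ℤ) : ℕ → Finset (ℕ → ℤ)
  | 0 => {0}
  | n + 1 => (signedPaths a n).biUnion fun b => ({a n, -a n} : Finset ℤ).image (Function.update b n)

lemma mem_signedPaths {a b : ℕ → ℤ} {n : ℕ} :
    b ∈ signedPaths a n ↔ (∀ k < n, |b k| = |a k|) ∧ ∀ k, n ≤ k → b k = 0 := by
  induction n generalizing b with
  | zero => simp [signedPaths, funext_iff]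
  | succ n ih =>
    simp only [signedPaths, mem_biUnion, mem_image, mem_insert, mem_singleton, ih]
    constructor
    · rintro ⟨c, ⟨hlt, hge⟩, s, hs, rfl⟩
      refine ⟨fun k hk => ?_, fun k hk => ?_⟩
      · rcases (Nat.lt_succ_iff_lt_or_eq.mp hk) with hk | rfl
        · rw [Function.update_of_ne hk.ne]; exact hlt k hk
        · rw [Function.update_self]; rcases hs with rfl | rfl <;> simp
      · rw [Function.update_of_ne (by omega)]; exact hge k (by omega)
    · rintro ⟨hlt, hge⟩
      refine ⟨Function.update b n 0, ⟨fun k hk => ?_, fun k hk => ?_⟩, b n, ?_, ?_⟩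
      · rw [Function.update_of_ne hk.ne]; exact hlt k (by omega)
      · rcases hk.eq_or_lt with rfl | hk
        · exact Function.update_self ..
        · rw [Function.update_of_ne hk.ne']; exact hge k hk
      · exact abs_eq_abs.mp (hlt n n.lt_succ_self)
      · simp

lemma sum_signedPaths_succ {M : Type*} [AddCommMonoid M] (f : (ℕ → ℤ) → M) (a : ℕ → ℤ)
    (n : ℕ) :
    ∑ b ∈ signedPaths a (n + 1), f b =
      ∑ c ∈ signedPaths a n, ∑ s ∈ ({a n, -a n} : Finset ℤ), f (Function.update c n s) := by
  classical
  rw [signedPaths, sum_biUnion]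
  · exact sum_congr rfl fun c _ => sum_image fun s _ t _ h => Function.update_injective c n h
  · intro c hc c' hc' hne
    simp only [Function.onFun, disjoint_left, mem_image, not_exists, not_and]
    rintro _ ⟨s, -, rfl⟩ s' - h
    -- paths in `signedPaths a n` vanish at `n`, so they are recovered by resetting index `n`
    have hc0 := (mem_signedPaths.mp hc).2 n le_rfl
    have hc0' := (mem_signedPaths.mp hc').2 n le_rfl
    apply hne
    calc c = Function.update (Function.update c n s) n 0 := by
          rw [Function.update_idem, Function.update_eq_self_iff.mpr hc0.symm]
      _ = c' := by rw [← h, Function.update_idem, Function.update_eq_self_iff.mpr hc0'.symm]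

noncomputable def pathWeight (α : ℝ) (n : ℕ) (b : ℕ → ℤ) : ℝ :=
  (if b 0 = 0 then 1 else 0) * ∏ k ∈ range n, stepP α (b k) (b (k + 1))

lemma pathWeight_nonneg {α : ℝ} (hα : α ∈ Set.Icc 0 1) (n : ℕ) (b : ℕ → ℤ) :
    0 ≤ pathWeight α n b :=
  mul_nonneg (by split_ifs <;> norm_num) (prod_nonneg fun _ _ => stepP_nonneg hα _ _)

lemma pathWeight_update_succ (α : ℝ) (n : ℕ) (b : ℕ → ℤ) (s : ℤ) :
    pathWeight α (n + 1) (Function.update b (n + 1) s) = pathWeight α n b * stepP α (b n) s := by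
  have hb : ∀ k ≤ n, Function.update b (n + 1) s k = b k :=
    fun k hk => Function.update_of_ne (by omega) _ _
  have hprod : ∏ k ∈ range n, stepP α (Function.update b (n + 1) s k)
      (Function.update b (n + 1) s (k + 1)) = ∏ k ∈ range n, stepP α (b k) (b (k + 1)) :=
    prod_congr rfl fun k hk => by
      rw [mem_range] at hk
      rw [hb k hk.le, hb (k + 1) hk]
  rw [pathWeight, pathWeight, prod_range_succ, hprod, hb 0 (Nat.zero_le n), hb n le_rfl,
    Function.update_self, mul_assoc]

theorem sum_pathWeight_signedPaths (α : ℝ) (a : ℕ → ℤ) (n : ℕ) :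
    ∑ b ∈ signedPaths a (n + 1), pathWeight α n b =
      (if a 0 = 0 then 1 else 0) * ∏ k ∈ range n, absStepP α (a k) (a (k + 1)) := by
  induction n with
  | zero =>
    rw [sum_signedPaths_succ]
    simp only [signedPaths, sum_singleton, pathWeight, Function.update_self,
      range_zero, prod_empty, mul_one, sum_ite_eq']
    simp [eq_comm]
  | succ n ih =>
    calc ∑ b ∈ signedPaths a (n + 2), pathWeight α (n + 1) b
        = ∑ c ∈ signedPaths a (n + 1), pathWeight α n c * absStepP α (c n) (a (n + 1)) := by
          simp only [sum_signedPaths_succ _ a (n + 1), pathWeight_update_succ, ← mul_sum,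
            absStepP]
      _ = ∑ c ∈ signedPaths a (n + 1), pathWeight α n c * absStepP α (a n) (a (n + 1)) :=
          sum_congr rfl fun c hc => by
            rw [absStepP_congr_abs ((mem_signedPaths.mp hc).1 n n.lt_succ_self)]
      _ = _ := by rw [← sum_mul, ih, prod_range_succ, mul_assoc]

lemma measurableSet_path_eq {Ω β : Type*} [MeasurableSpace Ω] [MeasurableSpace β]
    [MeasurableSingletonClass β] {S : ℕ → Ω → β} (hS : ∀ k, Measurable (S k)) (n : ℕ)
    (b : ℕ → β) : MeasurableSet {ω | ∀ k ≤ n, S k ω = b k} := by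
  simp only [Set.ofPred_forall]
  exact .iInter fun k => .iInter fun _ => hS k (measurableSet_singleton _)

open ProbabilityTheory in
lemma map_eq_map_of_forall_measure_path_eq {Ω Ω' β : Type*} [MeasurableSpace Ω]
    [MeasurableSpace Ω'] [MeasurableSpace β] [Countable β] [MeasurableSingletonClass β]
    {P : Measure Ω} {P' : Measure Ω'} [IsFiniteMeasure P] {X : ℕ → Ω → β} {Y : ℕ → Ω' → β}
    (hX : ∀ k, Measurable (X k)) (hY : ∀ k, Measurable (Y k))
    (h : ∀ n (x : ℕ → β), P {ω | ∀ k ≤ n, X k ω = x k} = P' {ω | ∀ k ≤ n, Y k ω = x k}) :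
    P.map (fun ω k => X k ω) = P'.map (fun ω k => Y k ω) := by
  have hXlim := isProjectiveLimit_map (P := P) (measurable_pi_lambda _ hX).aemeasurable
  refine hXlim.unique ?_
  rw [isProjectiveLimit_nat_iff (isProjectiveMeasureFamily_map_restrict
    fun k => (hX k).aemeasurable)]
  intro n
  refine .trans (Measure.ext_of_singleton fun x => ?_) (hXlim (Iic n))
  rw [Preorder.frestrictLe]
  let x' : ℕ → β := fun k => if hk : k ≤ n then x ⟨k, mem_Iic.2 hk⟩ else x ⟨n, mem_Iic.2 le_rfl⟩
  have hcyl : (Iic n).restrict ⁻¹' ({x} : Set (Iic n → β)) =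
      {f : ℕ → β | ∀ k ≤ n, f k = x' k} := by
    ext f
    simp only [Set.mem_preimage, Set.mem_singleton_iff, funext_iff, Subtype.forall, mem_Iic]
    exact forall₂_congr fun k hk => by simp [x', hk]
  rw [Measure.map_apply (measurable_restrict _) (measurableSet_singleton x),
    Measure.map_apply (measurable_restrict _) (measurableSet_singleton x), hcyl,
    Measure.map_apply (measurable_pi_lambda _ hY) (measurableSet_path_eq measurable_pi_apply n x'),
    Measure.map_apply (measurable_pi_lambda _ hX) (measurableSet_path_eq measurable_pi_apply n x')]
  exact (h n x').symm

lemma setOf_abs_path_eq_eq_empty {Ω : Type*} {S : ℕ → Ω → ℤ} {n k : ℕ} {a : ℕ → ℤ} (hk : k ≤ n)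
    (hak : a k < 0) : {ω | ∀ k ≤ n, |S k ω| = a k} = ∅ :=
  Set.eq_empty_of_forall_notMem fun _ hω => hak.not_ge ((hω k hk) ▸ abs_nonneg _)

lemma measure_abs_path_eq_sum {Ω : Type*} [MeasurableSpace Ω] {S : ℕ → Ω → ℤ}
    (hS : ∀ k, Measurable (S k)) (P : Measure Ω) (n : ℕ) (a : ℕ → ℤ) :
    P {ω | ∀ k ≤ n, |S k ω| = |a k|} =
      ∑ b ∈ signedPaths a (n + 1), P {ω | ∀ k ≤ n, S k ω = b k} := by
  have hunion : {ω | ∀ k ≤ n, |S k ω| = |a k|} =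
      ⋃ b ∈ signedPaths a (n + 1), {ω | ∀ k ≤ n, S k ω = b k} := by
    ext ω
    simp only [Set.mem_ofPred_eq, Set.mem_iUnion, exists_prop, mem_signedPaths]
    refine ⟨fun hω => ⟨fun k => if k ≤ n then S k ω else 0, ⟨?_, ?_⟩, ?_⟩, ?_⟩
    · intro k hk; simp [Nat.lt_succ_iff.mp hk, hω k (Nat.lt_succ_iff.mp hk)]
    · intro k hk; simp [show ¬ k ≤ n by omega]
    · intro k hk; simp [hk]
    · rintro ⟨b, ⟨hb, -⟩, hω⟩ k hk
      rw [hω k hk, hb k (Nat.lt_succ_of_le hk)]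
  have hdisj : (signedPaths a (n + 1) : Set (ℕ → ℤ)).PairwiseDisjoint
      fun b => {ω | ∀ k ≤ n, S k ω = b k} := by
    intro b hb b' hb' hne
    refine Set.disjoint_left.mpr fun ω hω hω' => hne (funext fun k => ?_)
    rcases le_or_gt k n with hk | hk
    · rw [← hω k hk, hω' k hk]
    · rw [(mem_signedPaths.mp hb).2 k hk, (mem_signedPaths.mp hb').2 k hk]
  rw [hunion, measure_biUnion_finset hdisj fun b _ => measurableSet_path_eq hS n b]

theorem IsSkewRW.measure_abs_path_eq {Ω : Type*} [MeasurableSpace Ω] {α : ℝ}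
    (hα : α ∈ Set.Icc 0 1) {P : Measure Ω} {S : ℕ → Ω → ℤ} (hS : IsSkewRW α P S) (n : ℕ)
    {a : ℕ → ℤ} (ha : ∀ k ≤ n, 0 ≤ a k) :
    P {ω | ∀ k ≤ n, |S k ω| = a k} = ENNReal.ofReal ((if a 0 = 0 then 1 else 0) *
      ∏ k ∈ range n, absStepP (1/2) (a k) (a (k + 1))) := by
  obtain ⟨-, hmeas, hpath⟩ := hS
  have habs : {ω | ∀ k ≤ n, |S k ω| = a k} = {ω | ∀ k ≤ n, |S k ω| = |a k|} := by
    ext ω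
    exact forall₂_congr fun k hk => by rw [abs_of_nonneg (ha k hk)]
  simp_rw [habs, measure_abs_path_eq_sum hmeas, hpath, ← absStepP_eq_half α,
    ← sum_pathWeight_signedPaths]
  exact (ENNReal.ofReal_sum_of_nonneg fun b _ => pathWeight_nonneg hα n b).symm

theorem skew_abs_eq_reflected_general {Ω Ω' : Type*} [MeasurableSpace Ω] [MeasurableSpace Ω']
    (P : Measure Ω) (P' : Measure Ω') (Sα : ℕ → Ω → ℤ) (S' : ℕ → Ω' → ℤ)
    (α : ℝ) (hα : α ∈ Set.Ioo (0 : ℝ) 1)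
    (hSα : IsSkewRW α P Sα) (hS' : IsSkewRW (1/2) P' S') :
    Measure.map (fun ω => fun k => |Sα k ω|) P =
      Measure.map (fun ω => fun k => |S' k ω|) P' := by
  have := hSα.1
  refine map_eq_map_of_forall_measure_path_eq (fun k => (hSα.2.1 k).abs)
    (fun k => (hS'.2.1 k).abs) fun n a => ?_
  by_cases ha : ∀ k ≤ n, 0 ≤ a k
  · rw [hSα.measure_abs_path_eq (Set.Ioo_subset_Icc_self hα) n ha,
      hS'.measure_abs_path_eq (by norm_num) n ha]
  · obtain ⟨k, hk, hak⟩ := not_forall₂.mp ha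
    rw [setOf_abs_path_eq_eq_empty hk (not_le.mp hak),
      setOf_abs_path_eq_eq_empty hk (not_le.mp hak), measure_empty, measure_empty]

theorem skew_abs_eq_reflected {Ω Ω' : Type*} [MeasurableSpace Ω] [MeasurableSpace Ω']
    (P : Measure Ω) (P' : Measure Ω') (Sα S : ℕ → Ω → ℤ) (S' : ℕ → Ω' → ℤ)
    (α : ℝ) (hα : α ∈ Set.Ioo (0 : ℝ) 1)
    (hSα : IsSkewRW α P Sα) (hS' : IsSkewRW (1/2) P' S') :
    Measure.map (fun ω => fun k => |Sα k ω|) P =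
      Measure.map (fun ω => fun k => |S' k ω|) P' :=
  skew_abs_eq_reflected_general P P' Sα S' α hα hSα hS'
end

section
/- Karamata-type Tauberian theorem for power series (case θ = 1, L ≡ 1): for a sequence of non-negative numbers (μ_n) with generating function ∑ μ_n t^n that is finite for t ∈ [0,1), if ∑_{n=0}^∞ μ_n t^n ∼ (1−t)^{−1} as t ↑ 1, then ∑_{j=0}^n μ_j ∼ n as n → ∞. -/
/-!
Karamata's argument. Write `L_t(g) = (1 - t) ∑ μ n t ^ n g(t ^ n)`. The hypothesis says
`L_t(1) → 1` as `t ↑ 1`; evaluated at `t ^ (k + 1)` it gives `L_t(x ^ k) → 1 / (k + 1)`, hence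
`L_t(P) → ∫₀¹ P` for every polynomial `P`. For `t = exp (-c / N)` we have `t ^ n ≥ a := exp (-c)`
exactly when `n ≤ N`, so polynomials squeezed around the indicator of `[a, 1]` (obtained from
piecewise linear ramps by Weierstrass) bound `(1 - t) ∑_{n ≤ N} μ n` below by about `1 - a` and
above by about `(1 - a) / a`. Since `N (1 - t) → c` and `(1 - exp (-c)) / c → 1` as `c → 0`, the
ratio `∑_{n ≤ N} μ n / N` is eventually in any neighbourhood of `1`.
-/

open Filter Set Topology Polynomial Finset MeasureTheory Real

theorem tendsto_one_sub_exp_neg_div_self :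
    Tendsto (fun x : ℝ => (1 - exp (-x)) / x) (𝓝[>] 0) (𝓝 1) := by
  have h : HasDerivAt (fun x => 1 - exp (-x)) 1 0 := by
    simpa using ((hasDerivAt_id (0 : ℝ)).neg.exp).const_sub 1
  refine h.tendsto_slope_zero_right.congr fun x => ?_
  simp [div_eq_inv_mul]

theorem tendsto_const_div_natCast_nhdsGT {c : ℝ} (hc : 0 < c) :
    Tendsto (fun N : ℕ => c / N) atTop (𝓝[>] 0) :=
  tendsto_nhdsWithin_of_tendsto_nhds_of_eventually_within _
    (tendsto_const_div_atTop_nhds_zero_nat c)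
    ((eventually_gt_atTop 0).mono fun _ hN => div_pos hc (Nat.cast_pos.2 hN))

theorem tendsto_exp_neg_const_div_natCast {c : ℝ} (hc : 0 < c) :
    Tendsto (fun N : ℕ => exp (-(c / N))) atTop (𝓝[<] 1) := by
  obtain ⟨hlim, hpos⟩ := tendsto_nhdsWithin_iff.1 (tendsto_const_div_natCast_nhdsGT hc)
  refine tendsto_nhdsWithin_of_tendsto_nhds_of_eventually_within _ ?_ ?_
  · simpa [Function.comp_def] using (continuous_exp.tendsto (-0)).comp hlim.neg
  · exact hpos.mono fun N hN => exp_lt_one_iff.2 (neg_lt_zero.2 hN)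

theorem tendsto_natCast_mul_one_sub_exp_neg_const_div {c : ℝ} (hc : 0 < c) :
    Tendsto (fun N : ℕ => N * (1 - exp (-(c / N)))) atTop (𝓝 c) := by
  have := (tendsto_one_sub_exp_neg_div_self.comp (tendsto_const_div_natCast_nhdsGT hc)).const_mul c
  rw [mul_one] at this
  refine this.congr' ((eventually_gt_atTop 0).mono fun N hN => ?_)
  have : (N : ℝ) ≠ 0 := Nat.cast_ne_zero.2 hN.ne'
  simp only [Function.comp_apply]
  field_simp

theorem exp_neg_div_natCast_pow {N : ℕ} (hN : N ≠ 0) (c : ℝ) :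
    exp (-(c / N)) ^ N = exp (-c) := by
  rw [← exp_nat_mul]
  congr 1
  field_simp

theorem exists_pos_mul_lt_one_sub_exp_neg {b : ℝ} (hb : b < 1) :
    ∃ c > 0, b * c < 1 - exp (-c) := by
  obtain ⟨c, hbc, hc⟩ :=
    ((tendsto_one_sub_exp_neg_div_self.eventually_const_lt hb).and self_mem_nhdsWithin).exists
  exact ⟨c, hc, (lt_div_iff₀ hc).1 hbc⟩

theorem exists_pos_one_sub_exp_neg_lt {b : ℝ} (hb : 1 < b) :
    ∃ c > 0, 1 - exp (-c) < b * exp (-c) * c := by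
  have hbexp : Tendsto (fun c : ℝ => b * exp (-c)) (𝓝[>] 0) (𝓝 b) := by
    refine Tendsto.mono_left ?_ nhdsWithin_le_nhds
    simpa using ((continuous_exp.comp continuous_neg).tendsto 0).const_mul b
  obtain ⟨c, hbc, hc⟩ :=
    ((tendsto_one_sub_exp_neg_div_self.eventually_lt hbexp hb).and self_mem_nhdsWithin).exists
  exact ⟨c, hc, (div_lt_iff₀ hc).1 hbc⟩

theorem integral_le_one_sub {f : ℝ → ℝ} {s : ℝ} (hs : s ≤ 1) (hf : IntervalIntegrable f volume 0 1)
    (h0 : ∀ x ∈ Icc 0 s, f x ≤ 0) (h1 : ∀ x ∈ Icc s 1, f x ≤ 1) :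
    ∫ x in (0 : ℝ)..1, f x ≤ 1 - s := by
  rcases lt_or_ge s 0 with hs0 | hs0
  · have := intervalIntegral.integral_mono_on zero_le_one hf intervalIntegrable_const
      fun x hx => h1 x ⟨hs0.le.trans hx.1, hx.2⟩
    simp only [intervalIntegral.integral_const, sub_zero, smul_eq_mul, mul_one] at this
    linarith
  have hsI : s ∈ uIcc (0 : ℝ) 1 := mem_uIcc_of_le hs0 hs
  have hf0 := hf.mono_set (uIcc_subset_uIcc left_mem_uIcc hsI)
  have hf1 := hf.mono_set (uIcc_subset_uIcc hsI right_mem_uIcc)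
  calc ∫ x in (0 : ℝ)..1, f x = (∫ x in (0 : ℝ)..s, f x) + ∫ x in s..1, f x :=
        (intervalIntegral.integral_add_adjacent_intervals hf0 hf1).symm
    _ ≤ (∫ _ in (0 : ℝ)..s, (0 : ℝ)) + ∫ _ in s..1, (1 : ℝ) :=
        add_le_add (intervalIntegral.integral_mono_on hs0 hf0 intervalIntegrable_const h0)
          (intervalIntegral.integral_mono_on hs hf1 intervalIntegrable_const h1)
    _ = 1 - s := by simp

theorem one_sub_le_integral {f : ℝ → ℝ} {s : ℝ} (hs : 0 ≤ s) (hf : IntervalIntegrable f volume 0 1)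
    (h0 : ∀ x ∈ Icc 0 s, 0 ≤ f x) (h1 : ∀ x ∈ Icc s 1, 1 ≤ f x) :
    1 - s ≤ ∫ x in (0 : ℝ)..1, f x := by
  rcases lt_or_ge 1 s with hs1 | hs1
  · have := intervalIntegral.integral_mono_on zero_le_one intervalIntegrable_const hf
      fun x hx => h0 x ⟨hx.1, hx.2.trans hs1.le⟩
    simp only [intervalIntegral.integral_const, sub_zero, smul_eq_mul, mul_zero] at this
    linarith
  have hsI : s ∈ uIcc (0 : ℝ) 1 := mem_uIcc_of_le hs hs1
  have hf0 := hf.mono_set (uIcc_subset_uIcc left_mem_uIcc hsI)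
  have hf1 := hf.mono_set (uIcc_subset_uIcc hsI right_mem_uIcc)
  calc 1 - s = (∫ _ in (0 : ℝ)..s, (0 : ℝ)) + ∫ _ in s..1, (1 : ℝ) := by simp
    _ ≤ (∫ x in (0 : ℝ)..s, f x) + ∫ x in s..1, f x :=
        add_le_add (intervalIntegral.integral_mono_on hs intervalIntegrable_const hf0 h0)
          (intervalIntegral.integral_mono_on hs1 intervalIntegrable_const hf1 h1)
    _ = ∫ x in (0 : ℝ)..1, f x := intervalIntegral.integral_add_adjacent_intervals hf0 hf1

theorem exists_polynomial_ge_integral_lt {f : ℝ → ℝ} (hf : ContinuousOn f (Icc 0 1)) {ε : ℝ}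
    (hε : 0 < ε) : ∃ P : ℝ[X], (∀ x ∈ Icc (0 : ℝ) 1, f x ≤ P.eval x) ∧
      ∫ x in (0 : ℝ)..1, P.eval x < (∫ x in (0 : ℝ)..1, f x) + ε := by
  obtain ⟨Q, hQ⟩ := exists_polynomial_near_of_continuousOn 0 1 f hf (ε / 3) (by positivity)
  refine ⟨Q + C (ε / 3), fun x hx => ?_, ?_⟩
  · have := (abs_lt.1 (hQ x hx)).1
    simp only [eval_add, eval_C]
    linarith
  · have hle : ∫ x in (0 : ℝ)..1, (Q + C (ε / 3)).eval x ≤ ∫ x in (0 : ℝ)..1, (f x + 2 * ε / 3) :=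
      intervalIntegral.integral_mono_on zero_le_one
        ((Polynomial.continuous _).intervalIntegrable 0 1)
        ((hf.intervalIntegrable_of_Icc zero_le_one).add intervalIntegrable_const) fun x hx => by
          have := (abs_lt.1 (hQ x hx)).2
          simp only [eval_add, eval_C]
          linarith
    rw [intervalIntegral.integral_add (hf.intervalIntegrable_of_Icc zero_le_one)
      intervalIntegrable_const] at hle
    simp only [intervalIntegral.integral_const, sub_zero, smul_eq_mul, one_mul] at hle
    linarith

theorem exists_polynomial_le_integral_gt {f : ℝ → ℝ} (hf : ContinuousOn f (Icc 0 1)) {ε : ℝ}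
    (hε : 0 < ε) : ∃ p : ℝ[X], (∀ x ∈ Icc (0 : ℝ) 1, p.eval x ≤ f x) ∧
      (∫ x in (0 : ℝ)..1, f x) - ε < ∫ x in (0 : ℝ)..1, p.eval x := by
  obtain ⟨P, hfP, hint⟩ := exists_polynomial_ge_integral_lt hf.neg hε
  refine ⟨-P, fun x hx => ?_, ?_⟩
  · simpa [neg_le] using hfP x hx
  · simp only [Pi.neg_apply, eval_neg, intervalIntegral.integral_neg] at hint ⊢
    linarith

noncomputable def ramp (s δ x : ℝ) : ℝ := max 0 (min 1 ((x - s) / δ))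

theorem continuous_ramp (s δ : ℝ) : Continuous (ramp s δ) := by
  unfold ramp; fun_prop

theorem ramp_nonneg (s δ x : ℝ) : 0 ≤ ramp s δ x := le_max_left _ _

theorem ramp_le_one (s δ x : ℝ) : ramp s δ x ≤ 1 := max_le zero_le_one (min_le_left _ _)

theorem ramp_of_le {s δ x : ℝ} (hδ : 0 < δ) (hx : x ≤ s) : ramp s δ x = 0 :=
  max_eq_left ((min_le_right _ _).trans (div_nonpos_of_nonpos_of_nonneg (by linarith) hδ.le))

theorem ramp_of_add_le {s δ x : ℝ} (hδ : 0 < δ) (hx : s + δ ≤ x) : ramp s δ x = 1 := by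
  rw [ramp, min_eq_left ((le_div_iff₀ hδ).2 (by linarith)), max_eq_right zero_le_one]

theorem exists_polynomial_le_indicator {a y : ℝ} (ha : 0 ≤ a) (hy : y < 1 - a) :
    ∃ p : ℝ[X], (∀ x ∈ Icc (0 : ℝ) 1, p.eval x ≤ 1) ∧ (∀ x ∈ Icc (0 : ℝ) 1, x ≤ a → p.eval x ≤ 0) ∧
      y < ∫ x in (0 : ℝ)..1, p.eval x := by
  set δ := (1 - a - y) / 2 with hδ_def
  have hδ : 0 < δ := by linarith
  obtain ⟨p, hp, hint⟩ :=
    exists_polynomial_le_integral_gt (continuous_ramp a δ).continuousOn hδ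
  have hramp : 1 - (a + δ) ≤ ∫ x in (0 : ℝ)..1, ramp a δ x :=
    one_sub_le_integral (by positivity) ((continuous_ramp a δ).intervalIntegrable 0 1)
      (fun x _ => ramp_nonneg a δ x) fun x hx => (ramp_of_add_le hδ hx.1).ge
  exact ⟨p, fun x hx => (hp x hx).trans (ramp_le_one a δ x),
    fun x hx hxa => (hp x hx).trans (ramp_of_le hδ hxa).le, by linarith⟩

theorem exists_polynomial_ge_indicator {a y : ℝ} (ha : a ≤ 1) (hy : 1 - a < y) :
    ∃ P : ℝ[X], (∀ x ∈ Icc (0 : ℝ) 1, 0 ≤ P.eval x) ∧ (∀ x ∈ Icc (0 : ℝ) 1, a ≤ x → 1 ≤ P.eval x) ∧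
      ∫ x in (0 : ℝ)..1, P.eval x < y := by
  set δ := (y - (1 - a)) / 2 with hδ_def
  have hδ : 0 < δ := by linarith
  obtain ⟨P, hP, hint⟩ :=
    exists_polynomial_ge_integral_lt (continuous_ramp (a - δ) δ).continuousOn hδ
  have hramp : ∫ x in (0 : ℝ)..1, ramp (a - δ) δ x ≤ 1 - (a - δ) :=
    integral_le_one_sub (by linarith) ((continuous_ramp _ δ).intervalIntegrable 0 1)
      (fun x hx => (ramp_of_le hδ hx.2).le) fun x _ => ramp_le_one _ δ x
  exact ⟨P, fun x hx => (ramp_nonneg _ δ x).trans (hP x hx),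
    fun x hx hax => (ramp_of_add_le hδ (by linarith)).ge.trans (hP x hx), by linarith⟩

theorem tendsto_pow_nhdsLT_one {k : ℕ} (hk : k ≠ 0) :
    Tendsto (fun t : ℝ => t ^ k) (𝓝[<] 1) (𝓝[<] 1) := by
  refine tendsto_nhdsWithin_of_tendsto_nhds_of_eventually_within _ ?_ ?_
  · simpa using ((continuous_pow k).tendsto (1 : ℝ)).mono_left nhdsWithin_le_nhds
  · filter_upwards [Ioo_mem_nhdsLT zero_lt_one] with t ht
    exact pow_lt_one₀ ht.1.le ht.2 hk

theorem integral_zero_one_eval_eq_sum (P : ℝ[X]) :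
    ∫ x in (0 : ℝ)..1, P.eval x = ∑ i ∈ range (P.natDegree + 1), P.coeff i * ((i : ℝ) + 1)⁻¹ := by
  simp_rw [eval_eq_sum_range]
  rw [intervalIntegral.integral_finsetSum fun i _ =>
    (by fun_prop : Continuous fun x : ℝ => P.coeff i * x ^ i).intervalIntegrable 0 1]
  refine sum_congr rfl fun i _ => ?_
  simp

theorem mul_pow_mul_eval_pow_eq_sum (m t : ℝ) (n : ℕ) (P : ℝ[X]) :
    m * t ^ n * P.eval (t ^ n) =
      ∑ i ∈ range (P.natDegree + 1), P.coeff i * (m * (t ^ (i + 1)) ^ n) := by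
  rw [eval_eq_sum_range, mul_sum]
  refine sum_congr rfl fun i _ => ?_
  ring

section PowerSeries

variable {μ : ℕ → ℝ}

theorem summable_mul_pow_mul_eval_pow
    (hsum : ∀ t ∈ Ico (0 : ℝ) 1, Summable fun n => μ n * t ^ n) {t : ℝ} (ht : t ∈ Ico (0 : ℝ) 1)
    (P : ℝ[X]) : Summable fun n => μ n * t ^ n * P.eval (t ^ n) := by
  simp_rw [mul_pow_mul_eval_pow_eq_sum]
  exact summable_sum fun i _ =>
    (hsum _ ⟨pow_nonneg ht.1 _, pow_lt_one₀ ht.1 ht.2 i.succ_ne_zero⟩).mul_left _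

theorem tendsto_one_sub_mul_tsum_mul_pow_pow
    (hasymp : Tendsto (fun t : ℝ => (∑' n, μ n * t ^ n) * (1 - t)) (𝓝[<] 1) (𝓝 1)) (k : ℕ) :
    Tendsto (fun t : ℝ => (1 - t) * ∑' n, μ n * (t ^ (k + 1)) ^ n) (𝓝[<] 1)
      (𝓝 ((k : ℝ) + 1)⁻¹) := by
  have hgeom : Tendsto (fun t : ℝ => ∑ i ∈ range (k + 1), t ^ i) (𝓝[<] 1) (𝓝 (k + 1)) := by
    refine Tendsto.mono_left ?_ nhdsWithin_le_nhds
    have : Continuous fun t : ℝ => ∑ i ∈ range (k + 1), t ^ i := by fun_prop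
    simpa using this.tendsto 1
  rw [← one_div]
  refine ((hasymp.comp (tendsto_pow_nhdsLT_one k.succ_ne_zero)).div hgeom
    (by positivity)).congr' ?_
  filter_upwards [Ioo_mem_nhdsLT zero_lt_one] with t ht
  have hpos : 0 < ∑ i ∈ range (k + 1), t ^ i :=
    sum_pos (fun i _ => pow_pos ht.1 i) nonempty_range_add_one
  simp only [Pi.div_apply, Function.comp_apply]
  rw [← geom_sum_mul_neg]
  field_simp

theorem tendsto_one_sub_mul_tsum_mul_pow_mul_eval_pow
    (hsum : ∀ t ∈ Ico (0 : ℝ) 1, Summable fun n => μ n * t ^ n)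
    (hasymp : Tendsto (fun t : ℝ => (∑' n, μ n * t ^ n) * (1 - t)) (𝓝[<] 1) (𝓝 1)) (P : ℝ[X]) :
    Tendsto (fun t : ℝ => (1 - t) * ∑' n, μ n * t ^ n * P.eval (t ^ n)) (𝓝[<] 1)
      (𝓝 (∫ x in (0 : ℝ)..1, P.eval x)) := by
  rw [integral_zero_one_eval_eq_sum]
  refine (tendsto_finsetSum _ fun i _ =>
    (tendsto_one_sub_mul_tsum_mul_pow_pow hasymp i).const_mul (P.coeff i)).congr' ?_
  filter_upwards [Ioo_mem_nhdsLT zero_lt_one] with t ht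
  have hsum_pow (i : ℕ) : Summable fun n => μ n * (t ^ (i + 1)) ^ n :=
    hsum _ ⟨pow_nonneg ht.1.le _, pow_lt_one₀ ht.1.le ht.2 i.succ_ne_zero⟩
  simp_rw [mul_pow_mul_eval_pow_eq_sum]
  rw [Summable.tsum_finsetSum fun i _ => (hsum_pow i).mul_left _, mul_sum]
  refine sum_congr rfl fun i _ => ?_
  rw [tsum_mul_left]
  ring

theorem tsum_mul_pow_mul_le_sum_range (hpos : ∀ n, 0 ≤ μ n) {t a : ℝ} (ht0 : 0 ≤ t) (ht1 : t ≤ 1)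
    {g : ℝ → ℝ} (hg1 : ∀ x ∈ Icc (0 : ℝ) 1, g x ≤ 1) (hg0 : ∀ x ∈ Icc (0 : ℝ) 1, x ≤ a → g x ≤ 0)
    (hs : Summable fun n => μ n * t ^ n * g (t ^ n)) {N : ℕ} (hN : t ^ N ≤ a) :
    ∑' n, μ n * t ^ n * g (t ^ n) ≤ ∑ n ∈ range (N + 1), μ n := by
  have hmem (n : ℕ) : t ^ n ∈ Icc (0 : ℝ) 1 := ⟨pow_nonneg ht0 n, pow_le_one₀ ht0 ht1⟩
  have htail : ∑' n, μ (n + (N + 1)) * t ^ (n + (N + 1)) * g (t ^ (n + (N + 1))) ≤ 0 :=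
    tsum_nonpos fun n => mul_nonpos_of_nonneg_of_nonpos (mul_nonneg (hpos _) (pow_nonneg ht0 _))
      (hg0 _ (hmem _) ((pow_le_pow_of_le_one ht0 ht1 (by omega)).trans hN))
  have hhead : ∑ n ∈ range (N + 1), μ n * t ^ n * g (t ^ n) ≤ ∑ n ∈ range (N + 1), μ n :=
    sum_le_sum fun n _ => calc
      μ n * t ^ n * g (t ^ n) ≤ μ n * t ^ n :=
        mul_le_of_le_one_right (mul_nonneg (hpos n) (pow_nonneg ht0 n)) (hg1 _ (hmem n))
      _ ≤ μ n := mul_le_of_le_one_right (hpos n) (hmem n).2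
  rw [← hs.sum_add_tsum_nat_add (N + 1)]
  linarith

theorem mul_sum_range_le_tsum_mul_pow_mul (hpos : ∀ n, 0 ≤ μ n) {t a : ℝ} (ht0 : 0 ≤ t)
    (ht1 : t ≤ 1)
    {g : ℝ → ℝ} (hg0 : ∀ x ∈ Icc (0 : ℝ) 1, 0 ≤ g x) (hg1 : ∀ x ∈ Icc (0 : ℝ) 1, a ≤ x → 1 ≤ g x)
    (hs : Summable fun n => μ n * t ^ n * g (t ^ n)) {N : ℕ} (hN : a ≤ t ^ N) :
    a * ∑ n ∈ range (N + 1), μ n ≤ ∑' n, μ n * t ^ n * g (t ^ n) := by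
  have hmem (n : ℕ) : t ^ n ∈ Icc (0 : ℝ) 1 := ⟨pow_nonneg ht0 n, pow_le_one₀ ht0 ht1⟩
  rw [mul_sum]
  calc ∑ n ∈ range (N + 1), a * μ n ≤ ∑ n ∈ range (N + 1), μ n * t ^ n * g (t ^ n) :=
        sum_le_sum fun n hn => by
          have han : a ≤ t ^ n :=
            hN.trans (pow_le_pow_of_le_one ht0 ht1 (Nat.lt_succ_iff.1 (mem_range.1 hn)))
          calc a * μ n = μ n * a := mul_comm _ _
            _ ≤ μ n * t ^ n := mul_le_mul_of_nonneg_left han (hpos n)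
            _ ≤ μ n * t ^ n * g (t ^ n) :=
              le_mul_of_one_le_right (mul_nonneg (hpos n) (pow_nonneg ht0 n)) (hg1 _ (hmem n) han)
    _ ≤ ∑' n, μ n * t ^ n * g (t ^ n) :=
        hs.sum_le_tsum _ fun n _ =>
          mul_nonneg (mul_nonneg (hpos n) (pow_nonneg ht0 n)) (hg0 _ (hmem n))

theorem eventually_mul_lt_sum_range (hpos : ∀ n, 0 ≤ μ n)
    (hsum : ∀ t ∈ Ico (0 : ℝ) 1, Summable fun n => μ n * t ^ n)
    (hasymp : Tendsto (fun t : ℝ => (∑' n, μ n * t ^ n) * (1 - t)) (𝓝[<] 1) (𝓝 1))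
    {b : ℝ} (hb : b < 1) :
    ∀ᶠ N : ℕ in atTop, b * N < ∑ n ∈ range (N + 1), μ n := by
  obtain ⟨c, hc, hbc⟩ := exists_pos_mul_lt_one_sub_exp_neg hb
  obtain ⟨p, hp1, hp0, hint⟩ := exists_polynomial_le_indicator (exp_pos (-c)).le hbc
  have htN := tendsto_exp_neg_const_div_natCast hc
  have hmean := (tendsto_one_sub_mul_tsum_mul_pow_mul_eval_pow hsum hasymp p).comp htN
  have hscale := (tendsto_natCast_mul_one_sub_exp_neg_const_div hc).const_mul b
  filter_upwards [hscale.eventually_lt hmean hint, htN self_mem_nhdsWithin, eventually_ne_atTop 0]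
    with N hN ht1 hN0
  set t := exp (-(c / N))
  have ht : t ∈ Ico (0 : ℝ) 1 := ⟨(exp_pos _).le, ht1⟩
  have hsandwich := tsum_mul_pow_mul_le_sum_range hpos ht.1 ht.2.le hp1 hp0
    (summable_mul_pow_mul_eval_pow hsum ht p) (exp_neg_div_natCast_pow hN0 c).le
  have h1t : 0 ≤ 1 - t := by linarith [ht.2]
  refine lt_of_mul_lt_mul_left ?_ h1t
  calc (1 - t) * (b * N) = b * (N * (1 - t)) := by ring
    _ < (1 - t) * ∑' n, μ n * t ^ n * p.eval (t ^ n) := hN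
    _ ≤ (1 - t) * ∑ n ∈ range (N + 1), μ n := mul_le_mul_of_nonneg_left hsandwich h1t

theorem eventually_sum_range_lt_mul (hpos : ∀ n, 0 ≤ μ n)
    (hsum : ∀ t ∈ Ico (0 : ℝ) 1, Summable fun n => μ n * t ^ n)
    (hasymp : Tendsto (fun t : ℝ => (∑' n, μ n * t ^ n) * (1 - t)) (𝓝[<] 1) (𝓝 1))
    {b : ℝ} (hb : 1 < b) :
    ∀ᶠ N : ℕ in atTop, ∑ n ∈ range (N + 1), μ n < b * N := by
  obtain ⟨c, hc, hbc⟩ := exists_pos_one_sub_exp_neg_lt hb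
  set a := exp (-c)
  have ha : 0 < a := exp_pos _
  obtain ⟨P, hP0, hP1, hint⟩ :=
    exists_polynomial_ge_indicator (exp_le_one_iff.2 (neg_nonpos.2 hc.le)) hbc
  have htN := tendsto_exp_neg_const_div_natCast hc
  have hmean := (tendsto_one_sub_mul_tsum_mul_pow_mul_eval_pow hsum hasymp P).comp htN
  have hscale := (tendsto_natCast_mul_one_sub_exp_neg_const_div hc).const_mul (b * a)
  filter_upwards [hmean.eventually_lt hscale hint, htN self_mem_nhdsWithin, eventually_ne_atTop 0]
    with N hN ht1 hN0
  set t := exp (-(c / N))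
  have ht : t ∈ Ico (0 : ℝ) 1 := ⟨(exp_pos _).le, ht1⟩
  have hsandwich := mul_sum_range_le_tsum_mul_pow_mul hpos ht.1 ht.2.le hP0 hP1
    (summable_mul_pow_mul_eval_pow hsum ht P) (exp_neg_div_natCast_pow hN0 c).ge
  have h1t : 0 ≤ a * (1 - t) := mul_nonneg ha.le (by linarith [ht.2])
  refine lt_of_mul_lt_mul_left ?_ h1t
  calc a * (1 - t) * ∑ n ∈ range (N + 1), μ n = (1 - t) * (a * ∑ n ∈ range (N + 1), μ n) := by ring
    _ ≤ (1 - t) * ∑' n, μ n * t ^ n * P.eval (t ^ n) :=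
        mul_le_mul_of_nonneg_left hsandwich (by linarith [ht.2])
    _ < b * a * (N * (1 - t)) := hN
    _ = a * (1 - t) * (b * N) := by ring

end PowerSeries

theorem tauberian_theta_one (μ : ℕ → ℝ) (hpos : ∀ n, 0 ≤ μ n)
    (hsum : ∀ t ∈ Set.Ico (0 : ℝ) 1, Summable fun n => μ n * t ^ n)
    (hasymp : Filter.Tendsto (fun t : ℝ => (∑' n, μ n * t ^ n) * (1 - t))
      (nhdsWithin 1 (Set.Iio 1)) (nhds 1)) :
    Filter.Tendsto (fun n : ℕ => (∑ j ∈ Finset.range (n + 1), μ j) / (n : ℝ))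
      Filter.atTop (nhds 1) := by
  refine tendsto_order.2 ⟨fun b hb => ?_, fun b hb => ?_⟩
  · filter_upwards [eventually_mul_lt_sum_range hpos hsum hasymp hb, eventually_gt_atTop 0]
      with N hN hN0
    exact (lt_div_iff₀ (Nat.cast_pos.2 hN0)).2 hN
  · filter_upwards [eventually_sum_range_lt_mul hpos hsum hasymp hb, eventually_gt_atTop 0]
      with N hN hN0
    exact (div_lt_iff₀ (Nat.cast_pos.2 hN0)).2 hN
end

section
/- For any α ∈ (0,1) there exists a constant C_α > 0 such that for all natural numbers j ≤ k, E|S_k − S_j|⁴ ≤ C_α (k−j)², where S is the α-skew random walk. -/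
open MeasureTheory

/-!
Let `T` be the transition operator of the walk on `ℤ → ℝ`. By the Markov property,
`E (S (j + n) - S j)⁴ = (T ^ j) (fun y => (T ^ n) (fun x => (x - y)⁴) y) 0`, so it suffices to
bound the centred fourth moment `(T ^ n) (fun x => (x - m)⁴) m` uniformly in the starting point
`m`. Dynkin's formula evaluates it exactly: it is `∑ i < n, (6 E (S i - m)² + 1)` plus the drift
`-4 (2α - 1) (m + m³) L n m`, and `E (S i - m)² = i - 2 m (2α - 1) L i m`, where `L n m`
(`localTime`) is the expected number of visits to `0` before time `n`, starting from `m`. As `|S|`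
is a reflected simple random walk for every `α`, `L` does not depend on `α`; the moments of the
symmetric walk then give `|m| L n m ≤ n / 2` (test against `(|x| - |m|)² ≥ 0`) and
`|m|³ L n m ≤ 14 n²` (test against `m² (|m| |x| - m x) ≤ 2 (x - m)⁴`).
-/

open Function

lemma MeasureTheory.integral_eq_sum_of_partition {Ω ι : Type*} [MeasurableSpace Ω] [Fintype ι]
    {P : Measure Ω} [IsProbabilityMeasure P] {C : ι → Set Ω} (hC : ∀ i, MeasurableSet (C i))
    (hdisj : Pairwise (Disjoint on C)) (hsum : ∑ i, P (C i) = 1) {F : Ω → ℝ} {c : ι → ℝ}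
    (hF : ∀ i, ∀ ω ∈ C i, F ω = c i) :
    ∫ ω, F ω ∂P = ∑ i, P.real (C i) * c i := by
  have hcover : ∀ᵐ ω ∂P, ω ∈ ⋃ i, C i := by
    rw [ae_iff, ← Set.compl_def, prob_compl_eq_zero_iff (.iUnion hC), measure_iUnion hdisj hC,
      tsum_fintype, hsum]
  have hae : F =ᵐ[P] fun ω => ∑ i, (C i).indicator (fun _ => c i) ω := by
    filter_upwards [hcover] with ω hω
    obtain ⟨i, hi⟩ := Set.mem_iUnion.1 hω
    rw [Finset.sum_eq_single i (fun i' _ hne => Set.indicator_of_notMem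
      (Set.disjoint_left.1 (hdisj hne.symm) hi) _) (by simp), Set.indicator_of_mem hi, hF i ω hi]
  rw [integral_congr_ae hae,
    integral_finsetSum _ fun i _ => (integrable_const _).indicator (hC i)]
  simp [integral_indicator_const _ (hC _), mul_comm]

lemma sq_mul_sub_le_two_mul_pow_four (x c : ℝ) :
    c ^ 2 * (|c| * |x| - c * x) ≤ 2 * (x - c) ^ 4 := by
  rcases le_or_gt 0 (c * x) with h | h
  · rw [← abs_mul, abs_of_nonneg h, sub_self, mul_zero]; positivity
  · rw [← abs_mul, abs_of_neg h]
    have h1 : c ^ 2 ≤ (x - c) ^ 2 := by nlinarith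
    have h2 : -(2 * (c * x)) ≤ (x - c) ^ 2 := by nlinarith [sq_nonneg x, sq_nonneg c]
    nlinarith [mul_le_mul h1 h2 (by linarith) (sq_nonneg _)]

namespace SkewWalk

open Finset

def step (b : Bool) : ℤ := if b then 1 else -1

@[simp] lemma step_true : step true = 1 := rfl
@[simp] lemma step_false : step false = -1 := rfl

lemma step_injective : Injective step := by
  intro b b'; cases b <;> cases b' <;> simp [step]

variable {α : ℝ}

lemma stepP_nonneg (hα : α ∈ Set.Icc (0 : ℝ) 1) (m m' : ℤ) : 0 ≤ stepP α m m' := by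
  obtain ⟨h0, h1⟩ := hα
  unfold stepP
  split_ifs <;> linarith

lemma stepP_add_one (m : ℤ) : stepP α m (m + 1) = if m = 0 then α else 1 / 2 := if_pos rfl

lemma stepP_add_neg_one (m : ℤ) : stepP α m (m + -1) = if m = 0 then 1 - α else 1 / 2 := by
  rw [stepP, if_neg (by omega), if_pos (sub_eq_add_neg m 1).symm]

noncomputable def transition (α : ℝ) : Module.End ℝ (ℤ → ℝ) where
  toFun f m := ∑ b : Bool, stepP α m (m + step b) * f (m + step b)
  map_add' f g := by ext m; simp [mul_add, sum_add_distrib]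
  map_smul' c f := by ext m; simp [mul_add, mul_left_comm]

lemma transition_eq_sum (f : ℤ → ℝ) (m : ℤ) :
    transition α f m = ∑ b : Bool, stepP α m (m + step b) * f (m + step b) := rfl

lemma transition_apply (f : ℤ → ℝ) (m : ℤ) :
    transition α f m =
      if m = 0 then α * f 1 + (1 - α) * f (-1) else (f (m + 1) + f (m - 1)) / 2 := by
  simp only [transition_eq_sum, Fintype.sum_bool, step_true, step_false, stepP_add_one,
    stepP_add_neg_one]
  rw [← sub_eq_add_neg]
  split_ifs with hm
  · subst hm; simp
  · ring

lemma transition_pow_succ_apply (n : ℕ) (f : ℤ → ℝ) :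
    (transition α ^ (n + 1)) f = (transition α ^ n) (transition α f) := by
  rw [pow_succ, Module.End.mul_apply]

lemma transition_pow_one (n : ℕ) : (transition α ^ n) 1 = 1 := by
  have h1 : transition α 1 = 1 := by
    ext m; rw [transition_apply]; split_ifs <;> simp
  induction n with
  | zero => rfl
  | succ n ih => rw [transition_pow_succ_apply, h1, ih]

lemma transition_pow_const (n : ℕ) (c : ℝ) (m : ℤ) : (transition α ^ n) (fun _ => c) m = c := by
  have : (fun _ : ℤ => c) = c • (1 : ℤ → ℝ) := by ext; simp
  rw [this, map_smul, transition_pow_one]; simp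

lemma transition_mono (hα : α ∈ Set.Icc (0 : ℝ) 1) {f g : ℤ → ℝ} (hfg : f ≤ g) :
    transition α f ≤ transition α g := fun m => by
  simp only [transition_eq_sum]
  exact sum_le_sum fun b _ => mul_le_mul_of_nonneg_left (hfg _) (stepP_nonneg hα _ _)

lemma transition_pow_mono (hα : α ∈ Set.Icc (0 : ℝ) 1) (n : ℕ) {f g : ℤ → ℝ} (hfg : f ≤ g) :
    (transition α ^ n) f ≤ (transition α ^ n) g := by
  induction n generalizing f g with
  | zero => exact hfg
  | succ n ih =>
    rw [transition_pow_succ_apply, transition_pow_succ_apply]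
    exact ih (transition_mono hα hfg)

lemma transition_eq_of_even {f : ℤ → ℝ} (hf : f.Even) (β : ℝ) :
    transition α f = transition β f := by
  ext m
  rw [transition_apply, transition_apply]
  split_ifs
  · rw [hf 1]; ring
  · rfl

lemma transition_even {f : ℤ → ℝ} (hf : f.Even) : (transition α f).Even := fun m => by
  rw [transition_apply, transition_apply]
  by_cases hm : m = 0
  · subst hm; rfl
  · rw [if_neg (neg_ne_zero.2 hm), if_neg hm, ← hf (-m + 1), ← hf (-m - 1)]
    ring_nf

lemma transition_pow_eq_of_even (n : ℕ) {f : ℤ → ℝ} (hf : f.Even) (β : ℝ) :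
    (transition α ^ n) f = (transition β ^ n) f := by
  induction n generalizing f with
  | zero => rfl
  | succ n ih =>
    rw [transition_pow_succ_apply, transition_pow_succ_apply, ih (transition_even hf),
      transition_eq_of_even hf]

lemma transition_pow_apply_eq_add_sum (n : ℕ) (f : ℤ → ℝ) (m : ℤ) :
    (transition α ^ n) f m = f m + ∑ i ∈ range n, (transition α ^ i) (transition α f - f) m := by
  induction n with
  | zero => simp
  | succ n ih =>
    rw [sum_range_succ, ← add_assoc, ← ih, map_sub, ← transition_pow_succ_apply, Pi.sub_apply]
    ring

noncomputable def localTime (α : ℝ) (n : ℕ) (m : ℤ) : ℝ :=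
  ∑ i ∈ range n, (transition α ^ i) (Pi.single 0 1) m

lemma localTime_eq_localTime_half (n : ℕ) (m : ℤ) :
    localTime α n m = localTime (1 / 2) n m := by
  refine sum_congr rfl fun i _ => ?_
  rw [transition_pow_eq_of_even i (fun x => ?_) (1 / 2)]
  simp [Pi.single_apply]

lemma localTime_nonneg (n : ℕ) (m : ℤ) : 0 ≤ localTime α n m := by
  rw [localTime_eq_localTime_half]
  refine sum_nonneg fun i _ => ?_
  simpa using transition_pow_mono (by norm_num) i (Pi.single_nonneg.2 zero_le_one) m

lemma transition_sub_sq :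
    transition α (fun x : ℤ => (x : ℝ) ^ 2) - (fun x : ℤ => (x : ℝ) ^ 2) = 1 := by
  ext x
  rw [Pi.sub_apply, transition_apply, Pi.one_apply]
  split_ifs with hx
  · subst hx; norm_num
  · push_cast; ring

lemma transition_sub_abs :
    transition α (fun x : ℤ => |(x : ℝ)|) - (fun x : ℤ => |(x : ℝ)|) = Pi.single 0 1 := by
  ext x
  rw [Pi.sub_apply, transition_apply, Pi.single_apply]
  split_ifs with hx
  · subst hx; norm_num
  · have : |x + 1| + |x - 1| = 2 * |x| := by grind
    have hR : |(x : ℝ) + 1| + |(x : ℝ) - 1| = 2 * |(x : ℝ)| := by exact_mod_cast this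
    push_cast; linarith

lemma transition_sub_id :
    transition α (fun x : ℤ => (x : ℝ)) - (fun x : ℤ => (x : ℝ)) =
      (2 * α - 1) • Pi.single 0 1 := by
  ext x
  rw [Pi.sub_apply, transition_apply, Pi.smul_apply, Pi.single_apply, smul_eq_mul]
  split_ifs with hx
  · subst hx; norm_num; ring
  · push_cast; ring

lemma transition_sub_centered_sq (c : ℝ) :
    transition α (fun x : ℤ => ((x : ℝ) - c) ^ 2) - (fun x : ℤ => ((x : ℝ) - c) ^ 2) =
      1 - (2 * c * (2 * α - 1)) • Pi.single 0 1 := by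
  ext x
  rw [Pi.sub_apply, transition_apply, Pi.sub_apply, Pi.one_apply, Pi.smul_apply, Pi.single_apply,
    smul_eq_mul]
  split_ifs with hx
  · subst hx; norm_num; ring
  · push_cast; ring

lemma transition_sub_centered_fourth (c : ℝ) :
    transition α (fun x : ℤ => ((x : ℝ) - c) ^ 4) - (fun x : ℤ => ((x : ℝ) - c) ^ 4) =
      (6 : ℝ) • (fun x : ℤ => ((x : ℝ) - c) ^ 2) + 1 -
        (4 * (2 * α - 1) * (c + c ^ 3)) • Pi.single 0 1 := by
  ext x
  rw [Pi.sub_apply, transition_apply, Pi.sub_apply, Pi.add_apply, Pi.one_apply, Pi.smul_apply,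
    Pi.smul_apply, Pi.single_apply, smul_eq_mul, smul_eq_mul]
  split_ifs with hx
  · subst hx; norm_num; ring
  · push_cast; ring

lemma transition_pow_sq (n : ℕ) (m : ℤ) :
    (transition α ^ n) (fun x : ℤ => (x : ℝ) ^ 2) m = (m : ℝ) ^ 2 + n := by
  rw [transition_pow_apply_eq_add_sum, transition_sub_sq]
  simp only [transition_pow_one, Pi.one_apply, sum_const, card_range, nsmul_eq_mul, mul_one]

lemma transition_pow_abs (n : ℕ) (m : ℤ) :
    (transition α ^ n) (fun x : ℤ => |(x : ℝ)|) m = |(m : ℝ)| + localTime α n m := by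
  rw [transition_pow_apply_eq_add_sum, transition_sub_abs]; rfl

lemma transition_pow_id (n : ℕ) (m : ℤ) :
    (transition α ^ n) (fun x : ℤ => (x : ℝ)) m = m + (2 * α - 1) * localTime α n m := by
  rw [transition_pow_apply_eq_add_sum, transition_sub_id, localTime, mul_sum]
  simp only [map_smul, Pi.smul_apply, smul_eq_mul]

lemma transition_pow_centered_sq (n : ℕ) (m : ℤ) :
    (transition α ^ n) (fun x : ℤ => ((x : ℝ) - m) ^ 2) m =
      n - 2 * m * (2 * α - 1) * localTime α n m := by
  rw [transition_pow_apply_eq_add_sum, transition_sub_centered_sq, localTime, mul_sum]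
  simp only [map_sub, map_smul, transition_pow_one, Pi.sub_apply, Pi.smul_apply, Pi.one_apply,
    smul_eq_mul, sum_sub_distrib, sum_const, card_range, nsmul_eq_mul, mul_one]
  simp

lemma transition_pow_centered_fourth (n : ℕ) (m : ℤ) :
    (transition α ^ n) (fun x : ℤ => ((x : ℝ) - m) ^ 4) m =
      ∑ i ∈ range n, (6 * (i - 2 * m * (2 * α - 1) * localTime α i m) + 1)
        - 4 * (2 * α - 1) * (m + m ^ 3) * localTime α n m := by
  rw [transition_pow_apply_eq_add_sum, transition_sub_centered_fourth, localTime, mul_sum]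
  simp only [map_sub, map_add, map_smul, transition_pow_one, transition_pow_centered_sq,
    Pi.sub_apply, Pi.add_apply, Pi.smul_apply, Pi.one_apply, smul_eq_mul, sum_sub_distrib]
  simp

lemma abs_mul_localTime_le (n : ℕ) (m : ℤ) : |(m : ℝ)| * localTime α n m ≤ n / 2 := by
  have hpt : (2 * |(m : ℝ)|) • (fun x : ℤ => |(x : ℝ)|) ≤
      (fun x : ℤ => (x : ℝ) ^ 2) + ((m : ℝ) ^ 2) • 1 := fun x => by
    simp only [Pi.smul_apply, Pi.add_apply, Pi.one_apply, smul_eq_mul, mul_one]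
    nlinarith [sq_nonneg (|(x : ℝ)| - |(m : ℝ)|), sq_abs (x : ℝ), sq_abs (m : ℝ)]
  have h := transition_pow_mono (α := 1 / 2) (by norm_num) n hpt m
  simp only [map_smul, map_add, Pi.smul_apply, Pi.add_apply, smul_eq_mul, transition_pow_abs,
    transition_pow_sq, transition_pow_one, Pi.one_apply, mul_one] at h
  rw [localTime_eq_localTime_half]
  nlinarith [sq_abs (m : ℝ)]

lemma abs_pow_three_mul_localTime_le (n : ℕ) (m : ℤ) :
    |(m : ℝ)| ^ 3 * localTime α n m ≤ 14 * (n : ℝ) ^ 2 := by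
  have hpt : ((m : ℝ) ^ 2 * |(m : ℝ)|) • (fun x : ℤ => |(x : ℝ)|) -
      ((m : ℝ) ^ 3) • (fun x : ℤ => (x : ℝ)) ≤ (2 : ℝ) • (fun x : ℤ => ((x : ℝ) - m) ^ 4) :=
    fun x => by
      simp only [Pi.smul_apply, Pi.sub_apply, smul_eq_mul]
      nlinarith [sq_mul_sub_le_two_mul_pow_four (x : ℝ) m]
  have h := transition_pow_mono (α := 1 / 2) (by norm_num) n hpt m
  have hhalf : 2 * (1 / 2 : ℝ) - 1 = 0 := by norm_num
  simp only [map_smul, map_sub, Pi.smul_apply, Pi.sub_apply, smul_eq_mul, transition_pow_abs,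
    transition_pow_id, transition_pow_centered_fourth, hhalf, mul_zero, zero_mul, sub_zero,
    add_zero] at h
  have hsum : ∑ i ∈ range n, (6 * (i : ℝ) + 1) ≤ n * (7 * n) := by
    simpa using sum_le_card_nsmul (range n) (fun i : ℕ => 6 * (i : ℝ) + 1) (7 * n) fun i hi => by
      have : (i : ℝ) + 1 ≤ n := by exact_mod_cast mem_range.1 hi
      linarith
  have hm4 : (m : ℝ) ^ 2 * |(m : ℝ)| * |(m : ℝ)| = (m : ℝ) ^ 3 * m := by
    rw [mul_assoc, ← sq, sq_abs]; ring
  rw [mul_add, hm4] at h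
  rw [localTime_eq_localTime_half, show |(m : ℝ)| ^ 3 = (m : ℝ) ^ 2 * |(m : ℝ)| by
    rw [← sq_abs (m : ℝ)]; ring]
  linarith

lemma transition_pow_centered_fourth_le (hα : α ∈ Set.Icc (0 : ℝ) 1) (n : ℕ) (m : ℤ) :
    (transition α ^ n) (fun x : ℤ => ((x : ℝ) - m) ^ 4) m ≤ 71 * (n : ℝ) ^ 2 := by
  have hβ : |2 * α - 1| ≤ 1 := abs_le.2 ⟨by linarith [hα.1], by linarith [hα.2]⟩
  have hdrift (y : ℝ) : -((2 * α - 1) * y) ≤ |y| :=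
    (neg_le_abs _).trans (by rw [abs_mul]; exact mul_le_of_le_one_left (abs_nonneg _) hβ)
  have hsum : ∑ i ∈ range n, (6 * ((i : ℝ) - 2 * m * (2 * α - 1) * localTime α i m) + 1) ≤
      n * (13 * n) := by
    simpa using sum_le_card_nsmul (range n)
      (fun i : ℕ => 6 * ((i : ℝ) - 2 * m * (2 * α - 1) * localTime α i m) + 1) (13 * n)
      fun i hi => by
      have hi : (i : ℝ) + 1 ≤ n := by exact_mod_cast mem_range.1 hi
      have h1 := hdrift (m * localTime α i m)
      rw [abs_mul, abs_of_nonneg (localTime_nonneg i m)] at h1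
      nlinarith [abs_mul_localTime_le (α := α) i m]
  have hlast := hdrift ((m + m ^ 3) * localTime α n m)
  rw [abs_mul, abs_of_nonneg (localTime_nonneg n m)] at hlast
  have hm : |(m : ℝ) + m ^ 3| ≤ |(m : ℝ)| + |(m : ℝ)| ^ 3 :=
    (abs_add_le _ _).trans_eq (by rw [abs_pow])
  have hL1 := abs_mul_localTime_le (α := α) n m
  have hL3 := abs_pow_three_mul_localTime_le (α := α) n m
  have hn : (n : ℝ) ≤ (n : ℝ) ^ 2 := by exact_mod_cast Nat.le_self_pow two_ne_zero n
  rw [transition_pow_centered_fourth]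
  nlinarith [mul_le_mul_of_nonneg_right hm (localTime_nonneg (α := α) n m)]

/-- The path from `m` whose steps are `l` (`true` for up), frozen after its last step. -/
def pathOf (m : ℤ) (l : List Bool) (i : ℕ) : ℤ := m + ((l.take i).map step).sum

noncomputable def pathWeight (α : ℝ) (m : ℤ) (l : List Bool) : ℝ :=
  ∏ i ∈ range l.length, stepP α (pathOf m l i) (pathOf m l (i + 1))

@[simp] lemma pathOf_zero (m : ℤ) (l : List Bool) : pathOf m l 0 = m := by simp [pathOf]

lemma pathOf_cons_succ (m : ℤ) (b : Bool) (l : List Bool) (i : ℕ) :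
    pathOf m (b :: l) (i + 1) = pathOf (m + step b) l i := by
  simp [pathOf, add_assoc]

lemma pathOf_append (m : ℤ) (l₁ l₂ : List Bool) (i : ℕ) :
    pathOf m (l₁ ++ l₂) (l₁.length + i) = pathOf (pathOf m l₁ l₁.length) l₂ i := by
  simp [pathOf, List.take_append, List.take_of_length_le, add_assoc]

lemma eq_of_pathOf_eq {m : ℤ} {l l' : List Bool} (hlen : l.length = l'.length)
    (h : ∀ i ≤ l.length, pathOf m l i = pathOf m l' i) : l = l' := by
  induction l generalizing m l' with
  | nil => exact (List.length_eq_zero_iff.1 hlen.symm).symm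
  | cons b l ih =>
    obtain _ | ⟨b', l'⟩ := l'
    · simp at hlen
    · have hb : b = b' := step_injective <| by
        simpa [pathOf_cons_succ] using h 1 (by simp)
      subst hb
      refine congrArg _ (ih (m := m + step b) (by simpa using hlen) fun i hi => ?_)
      simpa [pathOf_cons_succ] using h (i + 1) (by simpa using hi)

lemma pathWeight_cons (m : ℤ) (b : Bool) (l : List Bool) :
    pathWeight α m (b :: l) = stepP α m (m + step b) * pathWeight α (m + step b) l := by
  simp only [pathWeight, List.length_cons, prod_range_succ', pathOf_cons_succ, pathOf_zero]
  ring

lemma pathWeight_append (m : ℤ) (l₁ l₂ : List Bool) :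
    pathWeight α m (l₁ ++ l₂) = pathWeight α m l₁ * pathWeight α (pathOf m l₁ l₁.length) l₂ := by
  induction l₁ generalizing m with
  | nil => simp [pathWeight]
  | cons b l ih =>
    rw [List.cons_append, pathWeight_cons, pathWeight_cons, ih, List.length_cons,
      pathOf_cons_succ]
    ring

lemma pathWeight_nonneg (hα : α ∈ Set.Icc (0 : ℝ) 1) (m : ℤ) (l : List Bool) :
    0 ≤ pathWeight α m l :=
  prod_nonneg fun _ _ => stepP_nonneg hα _ _

lemma sum_pathWeight_mul (n : ℕ) (f : ℤ → ℝ) (m : ℤ) :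
    ∑ s : Fin n → Bool, pathWeight α m (List.ofFn s) * f (pathOf m (List.ofFn s) n) =
      (transition α ^ n) f m := by
  induction n generalizing m with
  | zero => simp [pathWeight]
  | succ n ih =>
    rw [← (Fin.consEquiv fun _ => Bool).sum_comp, Fintype.sum_prod_type, pow_succ',
      Module.End.mul_apply, transition_eq_sum]
    refine sum_congr rfl fun b _ => ?_
    simp only [Fin.consEquiv, Equiv.coe_fn_mk, List.ofFn_cons, pathWeight_cons, pathOf_cons_succ,
      mul_assoc, ← mul_sum, ih]

lemma sum_pathWeight_append_mul (j n : ℕ) (g : ℤ → ℤ → ℝ) (m : ℤ) :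
    ∑ p : (Fin j → Bool) × (Fin n → Bool),
        pathWeight α m (List.ofFn p.1 ++ List.ofFn p.2) *
          g (pathOf m (List.ofFn p.1 ++ List.ofFn p.2) j)
            (pathOf m (List.ofFn p.1 ++ List.ofFn p.2) (j + n)) =
      (transition α ^ j) (fun y => (transition α ^ n) (g y) y) m := by
  rw [Fintype.sum_prod_type, ← sum_pathWeight_mul]
  refine sum_congr rfl fun u _ => ?_
  have hstart (v : Fin n → Bool) :
      pathOf m (List.ofFn u ++ List.ofFn v) j = pathOf m (List.ofFn u) j := by
    simpa using pathOf_append m (List.ofFn u) (List.ofFn v) 0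
  have hend (v : Fin n → Bool) : pathOf m (List.ofFn u ++ List.ofFn v) (j + n) =
      pathOf (pathOf m (List.ofFn u) j) (List.ofFn v) n := by
    simpa using pathOf_append m (List.ofFn u) (List.ofFn v) n
  simp only [pathWeight_append, List.length_ofFn, hstart, hend, mul_assoc, ← mul_sum,
    sum_pathWeight_mul]

variable {Ω : Type*}

def cylinder (S : ℕ → Ω → ℤ) (l : List Bool) : Set Ω :=
  {ω | ∀ i ≤ l.length, S i ω = pathOf 0 l i}

lemma measurableSet_cylinder [MeasurableSpace Ω] {S : ℕ → Ω → ℤ} (hS : ∀ k, Measurable (S k))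
    (l : List Bool) : MeasurableSet (cylinder S l) := by
  have : cylinder S l = ⋂ i ∈ Set.Iic l.length, S i ⁻¹' {pathOf 0 l i} := by
    ext; simp [cylinder]
  rw [this]
  exact .biInter (Set.to_countable _) fun i _ => hS i (measurableSet_singleton _)

lemma disjoint_cylinder (S : ℕ → Ω → ℤ) {l l' : List Bool} (hlen : l.length = l'.length)
    (hne : l ≠ l') : Disjoint (cylinder S l) (cylinder S l') :=
  Set.disjoint_left.2 fun _ hω hω' =>
    hne (eq_of_pathOf_eq hlen fun i hi => (hω i hi).symm.trans (hω' i (hlen ▸ hi)))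

lemma _root_.IsSkewRW.measure_cylinder [MeasurableSpace Ω] {P : Measure Ω} {S : ℕ → Ω → ℤ}
    (hS : IsSkewRW α P S) (l : List Bool) :
    P (cylinder S l) = ENNReal.ofReal (pathWeight α 0 l) := by
  simpa [pathWeight, cylinder] using hS.2.2 l.length (pathOf 0 l)

lemma _root_.IsSkewRW.integral_comp [MeasurableSpace Ω] {P : Measure Ω} {S : ℕ → Ω → ℤ}
    (hα : α ∈ Set.Icc (0 : ℝ) 1) (hS : IsSkewRW α P S) (g : ℤ → ℤ → ℝ) (j n : ℕ) :
    ∫ ω, g (S j ω) (S (j + n) ω) ∂P =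
      (transition α ^ j) (fun y => (transition α ^ n) (g y) y) 0 := by
  have := hS.1
  let C (p : (Fin j → Bool) × (Fin n → Bool)) := cylinder S (List.ofFn p.1 ++ List.ofFn p.2)
  have hlen (p : (Fin j → Bool) × (Fin n → Bool)) :
      (List.ofFn p.1 ++ List.ofFn p.2).length = j + n := by
    simp
  have hdisj : Pairwise (Disjoint on C) := fun p p' hne =>
    disjoint_cylinder S ((hlen p).trans (hlen p').symm) fun h => hne <| by
      obtain ⟨h₁, h₂⟩ := List.append_inj h (by simp)
      exact Prod.ext (List.ofFn_injective h₁) (List.ofFn_injective h₂)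
  have hsum : ∑ p, P (C p) = 1 := by
    have h1 := sum_pathWeight_append_mul (α := α) j n (fun _ _ => 1) 0
    simp only [mul_one, transition_pow_const] at h1
    simp only [C, hS.measure_cylinder, ← ENNReal.ofReal_sum_of_nonneg fun p _ =>
      pathWeight_nonneg hα 0 _, h1, ENNReal.ofReal_one]
  rw [integral_eq_sum_of_partition (fun p => measurableSet_cylinder hS.2.1 _) hdisj hsum
    (c := fun p => g (pathOf 0 (List.ofFn p.1 ++ List.ofFn p.2) j)
      (pathOf 0 (List.ofFn p.1 ++ List.ofFn p.2) (j + n)))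
    fun p ω hω => by rw [hω j (by simp), hω (j + n) (by simp)]]
  simp only [measureReal_def, hS.measure_cylinder,
    ENNReal.toReal_ofReal (pathWeight_nonneg hα 0 _)]
  exact sum_pathWeight_append_mul j n g 0

end SkewWalk

theorem skew_fourth_moment_bound {Ω : Type*} [MeasurableSpace Ω]
    (α : ℝ) (hα : α ∈ Set.Ioo (0 : ℝ) 1) :
    ∃ C : ℝ, 0 < C ∧ ∀ (P : Measure Ω) (S : ℕ → Ω → ℤ), IsSkewRW α P S →
      ∀ j k : ℕ, j ≤ k →
        ∫ ω, |((S k ω - S j ω : ℤ) : ℝ)| ^ 4 ∂P ≤ C * ((k : ℝ) - j) ^ 2 := by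
  open SkewWalk in
  refine ⟨71, by norm_num, fun P S hS j k hjk => ?_⟩
  have hα' : α ∈ Set.Icc (0 : ℝ) 1 := Set.Ioo_subset_Icc_self hα
  obtain ⟨n, rfl⟩ := Nat.exists_eq_add_of_le hjk
  rw [show ((j + n : ℕ) : ℝ) - j = n by push_cast; ring]
  calc ∫ ω, |((S (j + n) ω - S j ω : ℤ) : ℝ)| ^ 4 ∂P
      = ∫ ω, (fun y x : ℤ => ((x : ℝ) - y) ^ 4) (S j ω) (S (j + n) ω) ∂P := by
        push_cast; simp only [Even.pow_abs (by decide : Even 4)]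
    _ = (transition α ^ j) (fun y => (transition α ^ n) (fun x : ℤ => ((x : ℝ) - y) ^ 4) y) 0 :=
        hS.integral_comp hα' (fun y x => ((x : ℝ) - y) ^ 4) j n
    _ ≤ (transition α ^ j) (fun _ => 71 * (n : ℝ) ^ 2) 0 :=
        transition_pow_mono hα' j (fun y => transition_pow_centered_fourth_le hα' n y) 0
    _ = 71 * (n : ℝ) ^ 2 := transition_pow_const j _ 0
end
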